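/- arXiv:1903.11028 — 5 statements merged into one kernel-verified Lean document; each statement's English description precedes it below -/
import Mathlib

section
/- Let S be a finitely generated submonoid of ℕ^d. Then the set PF(S) of pseudo-Frobenius elements of S is finite. -/
open scoped BigOperators

/-- The natural cast of an element of `ℕ^d` into `ℚ^d`. -/
def toQ {d : ℕ} (x : Fin d → ℕ) : Fin d → ℚ := fun i => (x i : ℚ)

/-- The natural cast of an element of `ℕ^d` into `ℤ^d`. -/
def natToZ {d : ℕ} (x : Fin d → ℕ) : Fin d → ℤ := fun i => (x i : ℤ)

/-- The cone `pos(S)` of a submonoid `S ⊆ ℕ^d`: all nonnegative rational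
combinations of elements of `S`, as a subset of `ℚ^d`. -/
def posCone {d : ℕ} (S : AddSubmonoid (Fin d → ℕ)) : Set (Fin d → ℚ) :=
  {q | ∃ (k : ℕ) (c : Fin k → ℚ) (s : Fin k → (Fin d → ℕ)),
    (∀ i, 0 ≤ c i) ∧ (∀ i, s i ∈ S) ∧ q = ∑ i, c i • toQ (s i)}

/-- The gap set `H(S) = (pos(S) \ S) ∩ ℕ^d`. -/
def gaps {d : ℕ} (S : AddSubmonoid (Fin d → ℕ)) : Set (Fin d → ℕ) :=
  {x | toQ x ∈ posCone S ∧ x ∉ S}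

/-- The set of pseudo-Frobenius elements of `S`. -/
def PF {d : ℕ} (S : AddSubmonoid (Fin d → ℕ)) : Set (Fin d → ℕ) :=
  {a | a ∈ gaps S ∧ ∀ s ∈ S, s ≠ 0 → a + s ∈ S}

/-- A term order on `ℕ^d`: a total order compatible with addition for which
`0` is the least element. -/
def IsTermOrder {d : ℕ} (r : (Fin d → ℕ) → (Fin d → ℕ) → Prop) : Prop :=
  (∀ a b, r a b ∨ r b a) ∧ (∀ a b, r a b → r b a → a = b) ∧
    (∀ a b c, r a b → r b c → r a c) ∧ (∀ a, r 0 a) ∧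
    (∀ a b c, r a b → r (a + c) (b + c))

/-- The set of Frobenius elements of `S`: maxima of `H(S)` for some term order. -/
def FrobSet {d : ℕ} (S : AddSubmonoid (Fin d → ℕ)) : Set (Fin d → ℕ) :=
  {f | f ∈ gaps S ∧ ∃ r, IsTermOrder r ∧ ∀ h ∈ gaps S, r h f}

/-- The Apéry set of `S` relative to `b`:
`Ap(S,b) = {a ∈ S : a - b ∈ pos(S) \ S}`, the difference taken in `ℚ^d`. -/
def Apery {d : ℕ} (S : AddSubmonoid (Fin d → ℕ)) (b : Fin d → ℕ) : Set (Fin d → ℕ) :=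
  {a | a ∈ S ∧ (toQ a - toQ b) ∈ posCone S ∧ ¬ ∃ s ∈ S, toQ s = toQ a - toQ b}

/-- The partial order `≼_S`: `x ≼_S y` iff `y - x ∈ S`. -/
def leS {d : ℕ} (S : AddSubmonoid (Fin d → ℕ)) (x y : Fin d → ℕ) : Prop :=
  ∃ s ∈ S, x + s = y

/-- `a` is a `≼_S`-maximal element of `X`. -/
def MaximalIn {d : ℕ} (S : AddSubmonoid (Fin d → ℕ)) (X : Set (Fin d → ℕ))
    (a : Fin d → ℕ) : Prop :=
  a ∈ X ∧ ∀ a' ∈ X, a' ≠ a → ¬ leS S a a'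

/-- `S` is irreducible: it is not the intersection of two submonoids of `ℕ^d`
each properly containing it. -/
def IrreducibleMonoid {d : ℕ} (S : AddSubmonoid (Fin d → ℕ)) : Prop :=
  ¬ ∃ S₁ S₂ : AddSubmonoid (Fin d → ℕ), S < S₁ ∧ S < S₂ ∧
    (S : Set (Fin d → ℕ)) = (S₁ : Set (Fin d → ℕ)) ∩ (S₂ : Set (Fin d → ℕ))

/-- The multiplicity of `S`: componentwise infimum of `S \ {0}`. -/
noncomputable def mult {d : ℕ} (S : AddSubmonoid (Fin d → ℕ)) : Fin d → ℕ :=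
  fun i => sInf {n | ∃ s ∈ S, s ≠ 0 ∧ s i = n}

/-- `S` is a PI-monoid: `S = (a + T) ∪ {0}` for some submonoid `T` of `ℕ^d`
and some `a ∈ T \ {0}`. -/
def IsPIMonoid {d : ℕ} (S : AddSubmonoid (Fin d → ℕ)) : Prop :=
  ∃ (T : AddSubmonoid (Fin d → ℕ)) (a : Fin d → ℕ), a ∈ T ∧ a ≠ 0 ∧
    (S : Set (Fin d → ℕ)) = {x | ∃ t ∈ T, x = a + t} ∪ {0}

/-- `G` is a minimal system of generators of `S`. -/
def IsMinimalGenSet {d : ℕ} (S : AddSubmonoid (Fin d → ℕ)) (G : Set (Fin d → ℕ)) : Prop :=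
  AddSubmonoid.closure G = S ∧ ∀ G' ⊂ G, AddSubmonoid.closure G' ≠ S

/-!
If `S ≠ {0}`, fix `g ∈ S \ {0}`. Translation by `g` maps `PF(S)` injectively into `S`, onto an
antichain for `x ≼_S y ↔ y - x ∈ S`: if `a + g ≼_S b + g` with `a ≠ b`, then `b = a + s` for
some `s ∈ S \ {0}`, so `b ∈ S`. Writing the elements of `S` as `ℕ`-combinations of finitely many
generators, Dickson's lemma makes `≼_S` a well-quasi-order on `S`, so this antichain is finite.
If `S = {0}`, then `pos(S) = {0}` and there are no gaps at all.
-/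

theorem AddSubmonoid.FG.partiallyWellOrderedOn {M : Type*} [AddCommMonoid M]
    {S : AddSubmonoid M} (hS : S.FG) :
    (S : Set M).PartiallyWellOrderedOn fun x y => ∃ s ∈ S, x + s = y := by
  obtain ⟨T, rfl⟩ := hS
  set f : (T → ℕ) → M := fun c => ∑ t, c t • (t : M)
  have hf_add : ∀ c c', f (c + c') = f c + f c' := fun c c' => by
    simp only [f, Pi.add_apply, add_smul, Finset.sum_add_distrib]
  have hf_mem : ∀ c, f c ∈ AddSubmonoid.closure (T : Set M) := fun c =>
    AddSubmonoid.mem_closure_finset'.2 ⟨c, rfl⟩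
  have himage : (AddSubmonoid.closure (T : Set M) : Set M) = f '' Set.univ := by
    ext x
    simp [AddSubmonoid.mem_closure_finset', f, eq_comm]
  rw [himage]
  refine (Set.partiallyWellOrderedOn_of_wellQuasiOrdered wellQuasiOrdered_le _).image_of_monotone_on
    fun c _ c' _ hle => ⟨f (c' - c), hf_mem _, ?_⟩
  rw [← hf_add, add_tsub_cancel_of_le hle]

theorem toQ_injective {d : ℕ} : Function.Injective (toQ (d := d)) :=
  fun _ _ h => funext fun i => by simpa [toQ] using congrFun h i

theorem toQ_zero {d : ℕ} : toQ (0 : Fin d → ℕ) = 0 :=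
  funext fun _ => Nat.cast_zero

theorem gaps_bot {d : ℕ} : gaps (⊥ : AddSubmonoid (Fin d → ℕ)) = ∅ := by
  refine Set.eq_empty_of_forall_notMem ?_
  rintro x ⟨⟨k, c, s, -, hs, hx⟩, hxS⟩
  refine hxS ?_
  have hs0 : ∀ i, s i = 0 := fun i => AddSubmonoid.mem_bot.1 (hs i)
  have : toQ x = toQ 0 := by simp [hx, hs0, toQ_zero]
  rw [toQ_injective this]
  exact zero_mem _

theorem eq_of_add_eq_of_mem_PF {d : ℕ} {S : AddSubmonoid (Fin d → ℕ)} {a b s : Fin d → ℕ}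
    (ha : a ∈ PF S) (hb : b ∉ S) (hs : s ∈ S) (hab : a + s = b) : a = b := by
  rcases eq_or_ne s 0 with rfl | hs0
  · simpa using hab
  · exact absurd (hab ▸ ha.2 s hs hs0) hb

theorem isAntichain_image_add_PF {d : ℕ} {S : AddSubmonoid (Fin d → ℕ)} (g : Fin d → ℕ) :
    IsAntichain (fun x y => ∃ s ∈ S, x + s = y) ((· + g) '' PF S) := by
  rintro _ ⟨a, ha, rfl⟩ _ ⟨b, hb, rfl⟩ hne ⟨s, hs, hab⟩
  refine hne (congrArg (· + g) (eq_of_add_eq_of_mem_PF ha hb.1.2 hs ?_))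
  exact add_right_cancel ((add_right_comm a s g).trans hab)

theorem pf_finite_general {d : ℕ} (S : AddSubmonoid (Fin d → ℕ))
    (hfg : S.FG) : (PF S).Finite := by
  rcases S.bot_or_exists_ne_zero with rfl | ⟨g, hgS, hg0⟩
  · exact Set.finite_empty.subset fun a ha => gaps_bot ▸ ha.1
  · have hinj : Set.InjOn (· + g) (PF S) := fun _ _ _ _ h => add_right_cancel h
    have himage : (· + g) '' PF S ⊆ S := by
      rintro _ ⟨a, ha, rfl⟩
      exact ha.2 g hgS hg0
    exact Set.Finite.of_finite_image
      ((isAntichain_image_add_PF g).finite_of_partiallyWellOrderedOn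
        (hfg.partiallyWellOrderedOn.mono himage)) hinj

/-- The pseudo-Frobenius set of a finitely generated submonoid
of `ℕ^d` is finite. -/
theorem pf_finite {d : ℕ} (hd : 1 ≤ d) (S : AddSubmonoid (Fin d → ℕ))
    (hfg : S.FG) : (PF S).Finite :=
  pf_finite_general S hfg
end

section
/- (Gluing theorem) Let S₁ and S₂ be finitely generated submonoids of ℕ^d, let d₀ ∈ (S₁ ∩ S₂) \ {0} be such that G(S₁) ∩ G(S₂) = ℤ·d₀, where G(S_i) denotes the subgroup of ℤ^d generated by S_i, and let S = S₁ + S₂ := {s₁ + s₂ : s₁ ∈ S₁, s₂ ∈ S₂} (so S is the gluing of S₁ and S₂ by d₀). If b₁ ∈ PF(S₁) and b₂ ∈ PF(S₂), then b₁ + b₂ + d₀ ∈ PF(S). In particular, if S₁ and S₂ have nonempty pseudo-Frobenius sets, then so does S. -/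
open scoped BigOperators

/-!
If `b₁ + b₂ + d₀ = s₁ + s₂` with `sᵢ ∈ Sᵢ`, then `b₁ - s₁ = s₂ - (b₂ + d₀)` lies in
`G(S₁) ∩ G(S₂) = ℤ d₀`, say it equals `k d₀`. For `k ≥ 0` this gives `b₁ = s₁ + k d₀ ∈ S₁`, and
for `k < 0` it gives `b₂ = s₂ + (-k - 1) d₀ ∈ S₂`; both contradict `bᵢ` being gaps. Adding a
nonzero `s₁ + s₂ ∈ S` to `b₁ + b₂ + d₀` lands in `S` because one of `b₁ + s₁`, `b₁ + d₀` lies in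
`S₁` and the matching one of `b₂ + d₀ + s₂`, `b₂ + s₂` lies in `S₂`.
-/

section
variable {d : ℕ}

lemma toQ_add (x y : Fin d → ℕ) : toQ (x + y) = toQ x + toQ y := by
  funext i; simp [toQ]

lemma natToZ_add (x y : Fin d → ℕ) : natToZ (x + y) = natToZ x + natToZ y := by
  funext i; simp [natToZ]

lemma natToZ_nsmul (n : ℕ) (x : Fin d → ℕ) : natToZ (n • x) = n • natToZ x := by
  funext i; simp [natToZ]

lemma natToZ_injective : Function.Injective (natToZ (d := d)) :=
  fun _ _ h => funext fun i => by simpa [natToZ] using congrFun h i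

lemma natToZ_mem_closure {S : AddSubmonoid (Fin d → ℕ)} {x : Fin d → ℕ} (hx : x ∈ S) :
    natToZ x ∈ AddSubgroup.closure (natToZ '' (S : Set (Fin d → ℕ))) :=
  AddSubgroup.subset_closure ⟨x, hx, rfl⟩

lemma toQ_mem_posCone {S : AddSubmonoid (Fin d → ℕ)} {x : Fin d → ℕ} (hx : x ∈ S) :
    toQ x ∈ posCone S :=
  ⟨1, fun _ => 1, fun _ => x, fun _ => zero_le_one, fun _ => hx, by simp⟩

lemma posCone_mono {S T : AddSubmonoid (Fin d → ℕ)} (h : S ≤ T) : posCone S ⊆ posCone T := by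
  rintro q ⟨k, c, s, hc, hs, rfl⟩
  exact ⟨k, c, s, hc, fun i => h (hs i), rfl⟩

lemma posCone_add {S : AddSubmonoid (Fin d → ℕ)} {x y : Fin d → ℚ}
    (hx : x ∈ posCone S) (hy : y ∈ posCone S) : x + y ∈ posCone S := by
  obtain ⟨k, c, s, hc, hs, rfl⟩ := hx
  obtain ⟨l, c', s', hc', hs', rfl⟩ := hy
  refine ⟨k + l, Fin.append c c', Fin.append s s', fun i => ?_, fun i => ?_, ?_⟩
  · cases i using Fin.addCases <;> simp [hc, hc']
  · cases i using Fin.addCases <;> simp [hs, hs']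
  · simp [Fin.sum_univ_add]

theorem add_add_ne_add_of_gluing {S₁ S₂ : AddSubmonoid (Fin d → ℕ)} {d₀ b₁ b₂ s₁ s₂ : Fin d → ℕ}
    (hd₀₁ : d₀ ∈ S₁) (hd₀₂ : d₀ ∈ S₂)
    (hglue : AddSubgroup.closure (natToZ '' (S₁ : Set (Fin d → ℕ))) ⊓
        AddSubgroup.closure (natToZ '' (S₂ : Set (Fin d → ℕ))) ≤
      AddSubgroup.zmultiples (natToZ d₀))
    (hb₁ : b₁ ∉ S₁) (hb₂ : b₂ ∉ S₂) (hb₁d : b₁ + d₀ ∈ S₁) (hb₂d : b₂ + d₀ ∈ S₂)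
    (hs₁ : s₁ ∈ S₁) (hs₂ : s₂ ∈ S₂) : b₁ + b₂ + d₀ ≠ s₁ + s₂ := by
  intro h
  have hZ : natToZ b₁ + natToZ b₂ + natToZ d₀ = natToZ s₁ + natToZ s₂ := by
    simpa only [natToZ_add] using congrArg natToZ h
  have hG₁ : natToZ b₁ - natToZ s₁ ∈ AddSubgroup.closure (natToZ '' (S₁ : Set (Fin d → ℕ))) := by
    have hsplit : natToZ b₁ - natToZ s₁ = natToZ (b₁ + d₀) - natToZ d₀ - natToZ s₁ := by
      rw [natToZ_add]; abel
    rw [hsplit]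
    exact sub_mem (sub_mem (natToZ_mem_closure hb₁d) (natToZ_mem_closure hd₀₁))
      (natToZ_mem_closure hs₁)
  have hG₂ : natToZ b₁ - natToZ s₁ ∈ AddSubgroup.closure (natToZ '' (S₂ : Set (Fin d → ℕ))) := by
    have hsplit : natToZ b₁ - natToZ s₁ = natToZ s₂ - natToZ (b₂ + d₀) := by
      rw [natToZ_add]; linear_combination hZ
    rw [hsplit]
    exact sub_mem (natToZ_mem_closure hs₂) (natToZ_mem_closure hb₂d)
  obtain ⟨k, hk⟩ := AddSubgroup.mem_zmultiples_iff.mp (hglue ⟨hG₁, hG₂⟩)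
  cases k with
  | ofNat n =>
    have hb₁eq : b₁ = s₁ + n • d₀ := natToZ_injective <| by
      rw [Int.ofNat_eq_natCast, natCast_zsmul] at hk
      rw [natToZ_add, natToZ_nsmul, hk]; abel
    exact hb₁ (hb₁eq ▸ add_mem hs₁ (nsmul_mem hd₀₁ n))
  | negSucc n =>
    have hb₂eq : b₂ = s₂ + n • d₀ := natToZ_injective <| by
      rw [negSucc_zsmul, succ_nsmul] at hk
      rw [natToZ_add, natToZ_nsmul]; linear_combination hZ + hk
    exact hb₂ (hb₂eq ▸ add_mem hs₂ (nsmul_mem hd₀₂ n))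

theorem exists_add_add_eq_of_gluing {S₁ S₂ : AddSubmonoid (Fin d → ℕ)}
    {d₀ b₁ b₂ s₁ s₂ : Fin d → ℕ} (hd₀₁ : d₀ ∈ S₁) (hd₀ : d₀ ≠ 0)
    (hb₁ : ∀ s ∈ S₁, s ≠ 0 → b₁ + s ∈ S₁) (hb₂ : ∀ s ∈ S₂, s ≠ 0 → b₂ + s ∈ S₂)
    (hb₂d : b₂ + d₀ ∈ S₂) (hs₁ : s₁ ∈ S₁) (hs₂ : s₂ ∈ S₂) (hs : s₁ + s₂ ≠ 0) :
    ∃ t₁ ∈ S₁, ∃ t₂ ∈ S₂, b₁ + b₂ + d₀ + (s₁ + s₂) = t₁ + t₂ := by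
  by_cases h₁ : s₁ = 0
  · subst h₁
    rw [zero_add] at hs
    exact ⟨b₁ + d₀, hb₁ d₀ hd₀₁ hd₀, b₂ + s₂, hb₂ s₂ hs₂ hs, by abel⟩
  · exact ⟨b₁ + s₁, hb₁ s₁ hs₁ h₁, b₂ + d₀ + s₂, add_mem hb₂d hs₂, by abel⟩

end

theorem gluing_pf_general {d : ℕ} (S₁ S₂ S : AddSubmonoid (Fin d → ℕ)) (d₀ : Fin d → ℕ)
    (hd₀₁ : d₀ ∈ S₁) (hd₀₂ : d₀ ∈ S₂) (hd₀0 : d₀ ≠ 0)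
    (hglue : AddSubgroup.closure (natToZ '' (S₁ : Set (Fin d → ℕ))) ⊓
        AddSubgroup.closure (natToZ '' (S₂ : Set (Fin d → ℕ))) =
      AddSubgroup.zmultiples (natToZ d₀))
    (hS : ∀ x, x ∈ S ↔ ∃ s₁ ∈ S₁, ∃ s₂ ∈ S₂, x = s₁ + s₂)
    (b₁ b₂ : Fin d → ℕ) (hb₁ : b₁ ∈ PF S₁) (hb₂ : b₂ ∈ PF S₂) :
    b₁ + b₂ + d₀ ∈ PF S := by
  have hS₁ : S₁ ≤ S := fun x hx => (hS x).2 ⟨x, hx, 0, zero_mem _, (add_zero x).symm⟩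
  have hS₂ : S₂ ≤ S := fun x hx => (hS x).2 ⟨0, zero_mem _, x, hx, (zero_add x).symm⟩
  have hb₂d : b₂ + d₀ ∈ S₂ := hb₂.2 d₀ hd₀₂ hd₀0
  refine ⟨⟨?_, ?_⟩, ?_⟩
  · rw [toQ_add, toQ_add]
    exact posCone_add (posCone_add (posCone_mono hS₁ hb₁.1.1) (posCone_mono hS₂ hb₂.1.1))
      (toQ_mem_posCone (hS₁ hd₀₁))
  · rw [hS]
    rintro ⟨s₁, hs₁, s₂, hs₂, h⟩
    exact add_add_ne_add_of_gluing hd₀₁ hd₀₂ hglue.le hb₁.1.2 hb₂.1.2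
      (hb₁.2 d₀ hd₀₁ hd₀0) hb₂d hs₁ hs₂ h
  · intro s hs hs0
    obtain ⟨s₁, hs₁, s₂, hs₂, rfl⟩ := (hS s).1 hs
    exact (hS _).2 (exists_add_add_eq_of_gluing hd₀₁ hd₀0 hb₁.2 hb₂.2 hb₂d hs₁ hs₂ hs0)

/-- Gluing: If `S = S₁ +_{d₀} S₂` is a gluing and
`bᵢ ∈ PF(Sᵢ)`, then `b₁ + b₂ + d₀ ∈ PF(S)`. -/
theorem gluing_pf {d : ℕ} (hd : 1 ≤ d) (S₁ S₂ S : AddSubmonoid (Fin d → ℕ))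
    (h₁ : S₁.FG) (h₂ : S₂.FG) (d₀ : Fin d → ℕ)
    (hd₀₁ : d₀ ∈ S₁) (hd₀₂ : d₀ ∈ S₂) (hd₀0 : d₀ ≠ 0)
    (hglue : AddSubgroup.closure (natToZ '' (S₁ : Set (Fin d → ℕ))) ⊓
        AddSubgroup.closure (natToZ '' (S₂ : Set (Fin d → ℕ))) =
      AddSubgroup.zmultiples (natToZ d₀))
    (hS : ∀ x, x ∈ S ↔ ∃ s₁ ∈ S₁, ∃ s₂ ∈ S₂, x = s₁ + s₂)
    (b₁ b₂ : Fin d → ℕ) (hb₁ : b₁ ∈ PF S₁) (hb₂ : b₂ ∈ PF S₂) :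
    b₁ + b₂ + d₀ ∈ PF S :=
  gluing_pf_general S₁ S₂ S d₀ hd₀₁ hd₀₂ hd₀0 hglue hS b₁ b₂ hb₁ hb₂
end

section
/- Let S be a finitely generated submonoid of ℕ^d that is irreducible and has a Frobenius element f ∈ F(S). Then S is maximal among all submonoids of ℕ^d having f as a Frobenius element: for every submonoid S' of ℕ^d with S ⊆ S' and f ∈ F(S'), one has S' = S. -/
open scoped BigOperators

/-!
If `S ⊊ S'` and `f ∉ S'`, then `S = S' ∩ ⟨S, f⟩`. Indeed, an element of
`⟨S, f⟩ \ S` has the form `f + t` with `t ∈ ℕ^d` and lies in `pos(S)`, so it is a gap of `S`;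
a term order for which `f` is the largest gap then forces `f + t = f`, which is not in `S'`.
Both `S'` and `⟨S, f⟩` properly contain `S`, contradicting irreducibility.
-/

section

variable {d : ℕ}

lemma toQ_nsmul_add (k : ℕ) (x y : Fin d → ℕ) :
    toQ (k • x + y) = (k : ℚ) • toQ x + toQ y := by
  funext i
  simp [toQ]

lemma smul_add_toQ_mem_posCone {S : AddSubmonoid (Fin d → ℕ)} {q : Fin d → ℚ}
    (hq : q ∈ posCone S) {c : ℚ} (hc : 0 ≤ c) {s : Fin d → ℕ} (hs : s ∈ S) :
    c • q + toQ s ∈ posCone S := by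
  obtain ⟨m, a, t, ha, ht, rfl⟩ := hq
  refine ⟨m + 1, Fin.cons 1 (fun i => c * a i), Fin.cons s t, ?_, ?_, ?_⟩
  · exact Fin.cases zero_le_one fun i => mul_nonneg hc (ha i)
  · exact Fin.cases hs ht
  · simp only [Fin.sum_univ_succ, Fin.cons_zero, Fin.cons_succ, one_smul, mul_smul,
      ← Finset.smul_sum]
    abel

lemma toQ_nsmul_add_mem_posCone {S : AddSubmonoid (Fin d → ℕ)} {x : Fin d → ℕ}
    (hx : toQ x ∈ posCone S) (k : ℕ) {s : Fin d → ℕ} (hs : s ∈ S) :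
    toQ (k • x + s) ∈ posCone S := by
  rw [toQ_nsmul_add]
  exact smul_add_toQ_mem_posCone hx k.cast_nonneg hs

lemma IsTermOrder.le_add_right {r : (Fin d → ℕ) → (Fin d → ℕ) → Prop} (hr : IsTermOrder r)
    (a b : Fin d → ℕ) : r a (a + b) := by
  simpa [add_comm] using hr.2.2.2.2 0 b a (hr.2.2.2.1 b)

lemma eq_zero_of_add_mem_gaps_of_mem_FrobSet {S : AddSubmonoid (Fin d → ℕ)} {f t : Fin d → ℕ}
    (hf : f ∈ FrobSet S) (ht : f + t ∈ gaps S) : t = 0 := by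
  obtain ⟨-, r, hr, hmax⟩ := hf
  have : f + t = f := hr.2.1 _ _ (hmax _ ht) (hr.le_add_right f t)
  simpa using this

lemma inf_closure_singleton_sup_eq_of_mem_FrobSet {S S' : AddSubmonoid (Fin d → ℕ)}
    {f : Fin d → ℕ} (hf : f ∈ FrobSet S) (hSS' : S ≤ S') (hfS' : f ∉ S') :
    S' ⊓ (AddSubmonoid.closure {f} ⊔ S) = S := by
  refine le_antisymm (fun x ⟨hxS', hx⟩ => ?_) (le_inf hSS' le_sup_right)
  obtain ⟨y, hy, s, hs, rfl⟩ := AddSubmonoid.mem_sup.1 hx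
  obtain ⟨k, rfl⟩ := AddSubmonoid.mem_closure_singleton.1 hy
  by_contra hxS
  cases k with
  | zero => exact hxS (by simpa using hs)
  | succ m =>
    have hgap : (m + 1) • f + s ∈ gaps S := ⟨toQ_nsmul_add_mem_posCone hf.1.1 _ hs, hxS⟩
    have hsplit : (m + 1) • f + s = f + (m • f + s) := by rw [succ_nsmul]; abel
    rw [hsplit] at hgap hxS'
    rw [eq_zero_of_add_mem_gaps_of_mem_FrobSet hf hgap, add_zero] at hxS'
    exact hfS' hxS'

end

theorem irreducible_maximal_general {d : ℕ} (S : AddSubmonoid (Fin d → ℕ))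
    (hirr : IrreducibleMonoid S) (f : Fin d → ℕ) (hf : f ∈ FrobSet S)
    (S' : AddSubmonoid (Fin d → ℕ)) (hSS' : S ≤ S') (hf' : f ∈ FrobSet S') :
    S' = S := by
  by_contra hne
  have hfS' : f ∉ S' := hf'.1.2
  have hlt_adjoin : S < AddSubmonoid.closure {f} ⊔ S :=
    lt_of_le_of_ne le_sup_right fun h =>
      hf.1.2 (h ▸ AddSubmonoid.mem_sup_left (AddSubmonoid.subset_closure rfl))
  refine hirr ⟨S', _, lt_of_le_of_ne hSS' (Ne.symm hne), hlt_adjoin, ?_⟩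
  rw [← AddSubmonoid.coe_inf, inf_closure_singleton_sup_eq_of_mem_FrobSet hf hSS' hfS']

/-- A finitely generated irreducible submonoid `S` of `ℕ^d` with
a Frobenius element `f` is maximal among submonoids of `ℕ^d` having `f` as a
Frobenius element. -/
theorem irreducible_maximal {d : ℕ} (S : AddSubmonoid (Fin d → ℕ)) (hfg : S.FG)
    (hirr : IrreducibleMonoid S) (f : Fin d → ℕ) (hf : f ∈ FrobSet S)
    (S' : AddSubmonoid (Fin d → ℕ)) (hSS' : S ≤ S') (hf' : f ∈ FrobSet S') :
    S' = S :=
  irreducible_maximal_general S hirr f hf S' hSS' hf'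
end

section
/- Let S be a submonoid of ℕ^d with S ≠ {0}, and let m(S) denote the componentwise infimum in ℕ^d of the set S \ {0}. Then S is a PI-monoid if and only if m(S) ∈ S \ {0} and the set (S \ {0}) − m(S) := {s − m(S) : s ∈ S \ {0}} (differences taken componentwise in ℕ^d, which is possible since m(S) is then the componentwise minimum of S \ {0}) is a submonoid of ℕ^d. -/
open scoped BigOperators

/-!
If `S = (a + T) ∪ {0}` with `a ≠ 0`, every nonzero element of `S` lies above `a`, so `a` is the
least nonzero element of `S`, hence `a = m(S)`, and `T` is recovered as `(S \ {0}) - a` by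
cancellation. Conversely, if `m = m(S)` is itself a nonzero element of `S`, every nonzero
`s ∈ S` is `m + (s - m)`, so `S = (m + T) ∪ {0}` for `T = (S \ {0}) - m`, and `m ∈ T` because
`2m ∈ S`.
-/

section CanonicallyOrdered

variable {M : Type*} [AddCommMonoid M] [PartialOrder M] [CanonicallyOrderedAdd M]
  {S T : AddSubmonoid M} {a : M}

theorem isLeast_of_eq_add_union (ha : a ≠ 0)
    (hS : (S : Set M) = {x | ∃ t ∈ T, x = a + t} ∪ {0}) :
    IsLeast {s | s ∈ S ∧ s ≠ 0} a := by
  refine ⟨⟨?_, ha⟩, ?_⟩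
  · rw [← SetLike.mem_coe, hS]
    exact Or.inl ⟨0, T.zero_mem, (add_zero a).symm⟩
  · rintro s ⟨hs, hs0⟩
    rw [← SetLike.mem_coe, hS] at hs
    obtain ⟨t, -, rfl⟩ | rfl := hs
    · exact le_self_add
    · exact absurd rfl hs0

theorem eq_sub_of_eq_add_union [IsLeftCancelAdd M] (ha : a ≠ 0)
    (hS : (S : Set M) = {x | ∃ t ∈ T, x = a + t} ∪ {0}) :
    (T : Set M) = {x | ∃ s ∈ S, s ≠ 0 ∧ x + a = s} := by
  ext x
  constructor
  · intro hx
    refine ⟨a + x, ?_, fun h => ha (add_eq_zero.mp h).1, add_comm x a⟩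
    rw [← SetLike.mem_coe, hS]
    exact Or.inl ⟨x, hx, rfl⟩
  · rintro ⟨s, hs, hs0, rfl⟩
    rw [← SetLike.mem_coe, hS] at hs
    obtain ⟨t, ht, hxt⟩ | h0 := hs
    · rw [add_comm] at hxt
      rwa [add_left_cancel hxt]
    · exact absurd h0 hs0

theorem eq_add_union_of_isLeast [Sub M] [OrderedSub M] (ha : IsLeast {s | s ∈ S ∧ s ≠ 0} a)
    (hT : (T : Set M) = {x | ∃ s ∈ S, s ≠ 0 ∧ x + a = s}) :
    a ∈ T ∧ (S : Set M) = {x | ∃ t ∈ T, x = a + t} ∪ {0} := by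
  obtain ⟨⟨haS, ha0⟩, hle⟩ := ha
  have hmemT : ∀ s ∈ S, s ≠ 0 → s - a ∈ T := fun s hs hs0 => by
    rw [← SetLike.mem_coe, hT]
    exact ⟨s, hs, hs0, tsub_add_cancel_of_le (hle ⟨hs, hs0⟩)⟩
  have haT : a ∈ T := by
    rw [← SetLike.mem_coe, hT]
    exact ⟨a + a, S.add_mem haS haS, fun h => ha0 (add_eq_zero.mp h).1, rfl⟩
  refine ⟨haT, ?_⟩
  ext x
  constructor
  · intro hx
    by_cases hx0 : x = 0
    · exact Or.inr hx0
    · exact Or.inl ⟨x - a, hmemT x hx hx0, (add_tsub_cancel_of_le (hle ⟨hx, hx0⟩)).symm⟩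
  · rintro (⟨t, ht, rfl⟩ | rfl)
    · rw [← SetLike.mem_coe, hT] at ht
      obtain ⟨s, hs, -, hts⟩ := ht
      rwa [add_comm, hts]
    · exact S.zero_mem

end CanonicallyOrdered

section Multiplicity

variable {d : ℕ} {S : AddSubmonoid (Fin d → ℕ)}

theorem mult_le {s : Fin d → ℕ} (hs : s ∈ S) (hs0 : s ≠ 0) : mult S ≤ s :=
  fun _ => Nat.sInf_le ⟨s, hs, hs0, rfl⟩

theorem mult_eq_of_isLeast {a : Fin d → ℕ} (ha : IsLeast {s | s ∈ S ∧ s ≠ 0} a) :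
    mult S = a :=
  le_antisymm (mult_le ha.1.1 ha.1.2) fun i =>
    le_csInf ⟨a i, a, ha.1.1, ha.1.2, rfl⟩ fun _ ⟨_, hs, hs0, hsi⟩ => hsi ▸ ha.2 ⟨hs, hs0⟩ i

theorem isLeast_mult (hm : mult S ∈ S) (hm0 : mult S ≠ 0) :
    IsLeast {s | s ∈ S ∧ s ≠ 0} (mult S) :=
  ⟨⟨hm, hm0⟩, fun _ ⟨hs, hs0⟩ => mult_le hs hs0⟩

end Multiplicity

theorem pi_monoid_iff_general {d : ℕ} (S : AddSubmonoid (Fin d → ℕ)) :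
    IsPIMonoid S ↔
      (mult S ∈ S ∧ mult S ≠ 0 ∧
        ∃ T : AddSubmonoid (Fin d → ℕ),
          (T : Set (Fin d → ℕ)) = {x | ∃ s ∈ S, s ≠ 0 ∧ x + mult S = s}) := by
  constructor
  · rintro ⟨T, a, -, ha0, hS⟩
    have ha := isLeast_of_eq_add_union ha0 hS
    rw [mult_eq_of_isLeast ha]
    exact ⟨ha.1.1, ha0, T, eq_sub_of_eq_add_union ha0 hS⟩
  · rintro ⟨hm, hm0, T, hT⟩
    obtain ⟨hmT, hS⟩ := eq_add_union_of_isLeast (isLeast_mult hm hm0) hT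
    exact ⟨T, mult S, hmT, hm0, hS⟩

/-- A nontrivial submonoid `S` of `ℕ^d` is a PI-monoid iff
`m(S) ∈ S \ {0}` and `(S \ {0}) - m(S)` is a submonoid of `ℕ^d`. -/
theorem pi_monoid_iff {d : ℕ} (S : AddSubmonoid (Fin d → ℕ)) (hS : S ≠ ⊥) :
    IsPIMonoid S ↔
      (mult S ∈ S ∧ mult S ≠ 0 ∧
        ∃ T : AddSubmonoid (Fin d → ℕ),
          (T : Set (Fin d → ℕ)) = {x | ∃ s ∈ S, s ≠ 0 ∧ x + mult S = s}) :=
  pi_monoid_iff_general S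
end

section
/- Let S be a submonoid of ℕ^d that is a PI-monoid. Then there exist a unique submonoid T of ℕ^d and a unique element a ∈ T \ {0} such that S = (a + T) ∪ {0}; namely, a = m(S) and T = (S \ {0}) − m(S). -/
open scoped BigOperators

/-!
In `S = (a + T) ∪ {0}` every nonzero element lies above `a` and `a` itself lies in `S`, so `a` is
the componentwise minimum `m(S)` of `S \ {0}`. Since `ℕ^d` is cancellative and has no nonzero
units, `T = (S \ {0}) - a` is then determined by `a`.
-/

section Presentation

variable {M : Type*} [AddCommMonoid M] [Subsingleton (AddUnits M)] {S T : AddSubmonoid M} {a : M}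

theorem mem_and_ne_zero_iff_of_presentation (ha : a ≠ 0)
    (hS : (S : Set M) = {x | ∃ t ∈ T, x = a + t} ∪ {0}) (x : M) :
    x ∈ S ∧ x ≠ 0 ↔ ∃ t ∈ T, x = a + t := by
  have hx : x ∈ S ↔ (∃ t ∈ T, x = a + t) ∨ x = 0 := by
    rw [← SetLike.mem_coe, hS]; rfl
  constructor
  · rintro ⟨hxS, hx0⟩
    exact (hx.1 hxS).resolve_right hx0
  · rintro ⟨t, ht, rfl⟩
    exact ⟨hx.2 (.inl ⟨t, ht, rfl⟩), fun h => ha (eq_zero_of_add_right h)⟩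

variable [IsLeftCancelAdd M]

theorem mem_iff_of_presentation (ha : a ≠ 0)
    (hS : (S : Set M) = {x | ∃ t ∈ T, x = a + t} ∪ {0}) (x : M) :
    x ∈ T ↔ a + x ∈ S ∧ a + x ≠ 0 := by
  rw [mem_and_ne_zero_iff_of_presentation ha hS]
  simp only [add_right_inj, exists_eq_right']

theorem eq_of_presentation {T₁ T₂ : AddSubmonoid M} (ha : a ≠ 0)
    (hS₁ : (S : Set M) = {x | ∃ t ∈ T₁, x = a + t} ∪ {0})
    (hS₂ : (S : Set M) = {x | ∃ t ∈ T₂, x = a + t} ∪ {0}) :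
    T₁ = T₂ :=
  AddSubmonoid.ext fun x => by
    rw [mem_iff_of_presentation ha hS₁, mem_iff_of_presentation ha hS₂]

theorem coe_eq_of_presentation (ha : a ≠ 0)
    (hS : (S : Set M) = {x | ∃ t ∈ T, x = a + t} ∪ {0}) :
    (T : Set M) = {x | ∃ s ∈ S, s ≠ 0 ∧ x + a = s} := by
  ext x
  rw [SetLike.mem_coe, mem_iff_of_presentation ha hS, Set.mem_ofPred_eq, add_comm x a]
  exact ⟨fun hx => ⟨_, hx.1, hx.2, rfl⟩, fun ⟨s, hs, hs0, hx⟩ => hx ▸ ⟨hs, hs0⟩⟩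

end Presentation

theorem mult_eq_of_forall_le {d : ℕ} {S : AddSubmonoid (Fin d → ℕ)} {a : Fin d → ℕ}
    (haS : a ∈ S) (ha : a ≠ 0) (hle : ∀ s ∈ S, s ≠ 0 → a ≤ s) : mult S = a := by
  funext i
  have hai : a i ∈ {n | ∃ s ∈ S, s ≠ 0 ∧ s i = n} := ⟨a, haS, ha, rfl⟩
  refine le_antisymm (Nat.sInf_le hai) (le_csInf ⟨_, hai⟩ ?_)
  rintro _ ⟨s, hs, hs0, rfl⟩
  exact hle s hs hs0 i

theorem mult_eq_of_presentation {d : ℕ} {S T : AddSubmonoid (Fin d → ℕ)} {a : Fin d → ℕ}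
    (ha : a ≠ 0) (hS : (S : Set (Fin d → ℕ)) = {x | ∃ t ∈ T, x = a + t} ∪ {0}) :
    mult S = a := by
  have haS := (mem_and_ne_zero_iff_of_presentation ha hS a).2 ⟨0, T.zero_mem, (add_zero a).symm⟩
  refine mult_eq_of_forall_le haS.1 ha fun s hs hs0 => ?_
  obtain ⟨t, -, rfl⟩ := (mem_and_ne_zero_iff_of_presentation ha hS s).1 ⟨hs, hs0⟩
  exact le_self_add

/-- A PI-monoid `S` has a unique presentation `S = (a + T) ∪ {0}`
with `T` a submonoid of `ℕ^d` and `a ∈ T \ {0}`; namely `a = m(S)` and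
`T = (S \ {0}) - m(S)`. -/
theorem pi_monoid_unique_presentation {d : ℕ} (S : AddSubmonoid (Fin d → ℕ))
    (h : IsPIMonoid S) :
    (∃ T : AddSubmonoid (Fin d → ℕ),
        (T : Set (Fin d → ℕ)) = {x | ∃ s ∈ S, s ≠ 0 ∧ x + mult S = s} ∧
        mult S ∈ T ∧ mult S ≠ 0 ∧
        (S : Set (Fin d → ℕ)) = {x | ∃ t ∈ T, x = mult S + t} ∪ {0}) ∧
      ∀ (T₁ T₂ : AddSubmonoid (Fin d → ℕ)) (a₁ a₂ : Fin d → ℕ),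
        a₁ ∈ T₁ → a₁ ≠ 0 →
        (S : Set (Fin d → ℕ)) = {x | ∃ t ∈ T₁, x = a₁ + t} ∪ {0} →
        a₂ ∈ T₂ → a₂ ≠ 0 →
        (S : Set (Fin d → ℕ)) = {x | ∃ t ∈ T₂, x = a₂ + t} ∪ {0} →
        T₁ = T₂ ∧ a₁ = a₂ := by
  obtain ⟨T, a, haT, ha, hS⟩ := h
  rw [mult_eq_of_presentation ha hS]
  refine ⟨⟨T, coe_eq_of_presentation ha hS, haT, ha, hS⟩,
    fun T₁ T₂ a₁ a₂ _ ha₁ hS₁ _ ha₂ hS₂ => ?_⟩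
  obtain rfl : a₁ = a₂ :=
    (mult_eq_of_presentation ha₁ hS₁).symm.trans (mult_eq_of_presentation ha₂ hS₂)
  exact ⟨eq_of_presentation ha₁ hS₁ hS₂, rfl⟩
end
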